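/- (Double-crossing method, special case: the core identity of Theorem 3/4.) Let K be a field, let n ≥ 3, and let A be an n×n matrix over K. Suppose the 'double-crossed' contiguous minor α = det(A_{1..n−2, 2..n−1}) is nonzero. Let m(r,c) denote the (r,c) minor of A. Then det(A) = ( m(n−1, 1) · m(n, n) − m(n−1, n) · m(n, 1) ) / α. That is, crossing out the top n−2 rows and the middle n−2 columns of A, forming the 2×2 matrix of unsigned minors of A at the four remaining positions (rows n−1, n and columns 1, n), taking its determinant, and dividing by α yields det(A). -/

import Mathlib

/-- The contiguous `k × k` submatrix of `A` whose upper-left corner is the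
(0-based) entry `(i, j)`. -/
def block {K : Type*} [Field K] {n : ℕ} (A : Matrix (Fin n) (Fin n) K)
    (i j k : ℕ) (hi : i + k ≤ n) (hj : j + k ≤ n) : Matrix (Fin k) (Fin k) K :=
  Matrix.of fun r c => A ⟨i + r.1, by omega⟩ ⟨j + c.1, by omega⟩

/-- `skip a x` is the `x`-th natural number (in increasing order) different from `a`. -/
def skip (a x : ℕ) : ℕ := if x < a then x else x + 1

theorem skip_le (a x : ℕ) : skip a x ≤ x + 1 := by unfold skip; split <;> omega

/-- The `(i, j)` minor of `A`: the determinant of the `(n-1) × (n-1)` submatrix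
obtained from `A` by deleting row `i` and column `j` (no sign attached). -/
def dmMinor {K : Type*} [Field K] {n : ℕ} (A : Matrix (Fin n) (Fin n) K)
    (i j : Fin n) : K :=
  (Matrix.of fun r c : Fin (n - 1) =>
    A ⟨skip i.1 r.1, by have := skip_le i.1 r.1; omega⟩
      ⟨skip j.1 c.1, by have := skip_le j.1 c.1; omega⟩).det

/-! The proof rests on a Jacobi-type identity for `2 × 2` minors of the adjugate. Let `D` be the
identity matrix with columns `j₁, j₂` replaced by columns `i₁, i₂` of `adj A`. Then `A * D` is `A`
with those columns replaced by `det A • eᵢ₁` and `det A • eᵢ₂`, while `det D` is the `2 × 2` minor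
of `adj A`. Taking determinants gives `det A * minor = det A ^ 2 * det F`, where `F` is `A` with
columns `j₁, j₂` replaced by `eᵢ₁, eᵢ₂`. Cancelling `det A` is legitimate for the generic matrix
over `ℤ[xᵢⱼ]`, and the identity then specializes to every matrix. With rows `n - 2, n - 1` and
columns `0, n - 1`, expanding `det F` along its two unit columns gives `± α`, and the cofactor
signs cancel. -/

namespace Matrix

variable {R : Type*} [CommRing R]

section Jacobi

variable {n : Type*} [Fintype n] [DecidableEq n]

theorem det_updateCol_updateCol_one {j₁ j₂ : n} (hj : j₁ ≠ j₂) (u v : n → R) :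
    (((1 : Matrix n n R).updateCol j₁ u).updateCol j₂ v).det = u j₁ * v j₂ - v j₁ * u j₂ := by
  -- a rank-two perturbation of `1`, so `det (1 + U * V) = det (1 + V * U)` is a `2 × 2` determinant
  set U : Matrix n (Fin 2) R :=
    of fun k => ![u k - (Pi.single j₁ 1 : n → R) k, v k - (Pi.single j₂ 1 : n → R) k]
  set V : Matrix (Fin 2) n R := of ![Pi.single j₁ 1, Pi.single j₂ 1]
  have hUV : ((1 : Matrix n n R).updateCol j₁ u).updateCol j₂ v = 1 + U * V := by
    ext k l
    rcases eq_or_ne l j₂ with rfl | hl₂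
    · simp [U, V, mul_apply, one_apply, Pi.single_apply, hj.symm]
    rcases eq_or_ne l j₁ with rfl | hl₁
    · simp [U, V, mul_apply, one_apply, Pi.single_apply, hj]
    · simp [U, V, mul_apply, one_apply, Pi.single_apply, hl₁, hl₂]
  have hVU : 1 + V * U = !![u j₁, v j₁; u j₂, v j₂] := by
    ext a b
    fin_cases a <;> fin_cases b <;> simp [U, V, hj, hj.symm]
  rw [hUV, det_one_add_mul_comm, hVU, det_fin_two_of]

theorem mulVec_adjugate_col (A : Matrix n n R) (i : n) :
    A *ᵥ (adjugate A).col i = A.det • Pi.single i 1 := by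
  ext r
  simp [mulVec, dotProduct, ← mul_apply, mul_adjugate, one_apply, Pi.single_apply]

theorem adjugate_mul_adjugate_sub_adjugate_mul_adjugate_of_det_ne_zero [IsDomain R]
    (A : Matrix n n R) (hA : A.det ≠ 0) {j₁ j₂ : n} (hj : j₁ ≠ j₂) (i₁ i₂ : n) :
    adjugate A j₁ i₁ * adjugate A j₂ i₂ - adjugate A j₁ i₂ * adjugate A j₂ i₁ =
      A.det * ((A.updateCol j₁ (Pi.single i₁ 1)).updateCol j₂ (Pi.single i₂ 1)).det := by
  set D := ((1 : Matrix n n R).updateCol j₁ ((adjugate A).col i₁)).updateCol j₂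
    ((adjugate A).col i₂)
  have hD : D.det = adjugate A j₁ i₁ * adjugate A j₂ i₂ - adjugate A j₁ i₂ * adjugate A j₂ i₁ :=
    det_updateCol_updateCol_one hj _ _
  have hAD : A * D =
      (A.updateCol j₁ (A.det • Pi.single i₁ 1)).updateCol j₂ (A.det • Pi.single i₂ 1) := by
    simp only [D, mul_updateCol, mul_one, mulVec_adjugate_col]
  apply mul_left_cancel₀ hA
  rw [← hD, ← det_mul, hAD, det_updateCol_smul, updateCol_comm _ hj, det_updateCol_smul,
    updateCol_comm _ hj.symm]

theorem adjugate_mul_adjugate_sub_adjugate_mul_adjugate (A : Matrix n n R) {j₁ j₂ : n}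
    (hj : j₁ ≠ j₂) (i₁ i₂ : n) :
    adjugate A j₁ i₁ * adjugate A j₂ i₂ - adjugate A j₁ i₂ * adjugate A j₂ i₁ =
      A.det * ((A.updateCol j₁ (Pi.single i₁ 1)).updateCol j₂ (Pi.single i₂ 1)).det := by
  set X := mvPolynomialX n n ℤ
  set f := MvPolynomial.aeval (R := ℤ) fun p : n × n => A p.1 p.2
  have hX : f.mapMatrix X = A := mvPolynomialX_mapMatrix_aeval ℤ A
  have hadj (j i : n) : f (adjugate X j i) = adjugate A j i := by
    rw [← hX, ← AlgHom.map_adjugate]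
    rfl
  have hdet (M : Matrix n n (MvPolynomial (n × n) ℤ)) : f M.det = (f.mapMatrix M).det :=
    AlgHom.map_det f M
  have hsingle (i : n) : f ∘ Pi.single i 1 = Pi.single i 1 :=
    (Pi.single_op (fun _ => f) (fun _ => map_zero f) i 1).symm.trans (by rw [map_one])
  have hF : f.mapMatrix ((X.updateCol j₁ (Pi.single i₁ 1)).updateCol j₂ (Pi.single i₂ 1)) =
      (A.updateCol j₁ (Pi.single i₁ 1)).updateCol j₂ (Pi.single i₂ 1) := by
    rw [AlgHom.mapMatrix_apply, map_updateCol, map_updateCol, ← AlgHom.mapMatrix_apply, hX,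
      hsingle, hsingle]
  have hgeneric := congrArg f (adjugate_mul_adjugate_sub_adjugate_mul_adjugate_of_det_ne_zero X
    (det_mvPolynomialX_ne_zero n ℤ) hj i₁ i₂)
  simpa only [map_sub, map_mul, hadj, hdet, hF, hX] using hgeneric

end Jacobi

theorem det_updateCol_single_one {k : ℕ} (M : Matrix (Fin (k + 1)) (Fin (k + 1)) R)
    (i j : Fin (k + 1)) :
    (M.updateCol j (Pi.single i 1)).det =
      (-1) ^ (i + j : ℕ) * (M.submatrix i.succAbove j.succAbove).det := by
  rw [← det_transpose, ← updateRow_transpose, ← adjugate_apply, adjugate_fin_succ_eq_det_submatrix,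
    ← det_transpose, transpose_submatrix, transpose_transpose, add_comm (j : ℕ)]

theorem det_updateCol_zero_updateCol_last {k : ℕ} (B : Matrix (Fin (k + 2)) (Fin (k + 2)) R) :
    ((B.updateCol 0 (Pi.single (Fin.last k).castSucc 1)).updateCol (Fin.last (k + 1))
        (Pi.single (Fin.last (k + 1)) 1)).det =
      (-1) ^ k * (B.submatrix (Fin.castSucc ∘ Fin.castSucc) (Fin.castSucc ∘ Fin.succ)).det := by
  have hcorner : (B.updateCol 0 (Pi.single (Fin.last k).castSucc 1)).submatrix Fin.castSucc
      Fin.castSucc =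
        (B.submatrix Fin.castSucc Fin.castSucc).updateCol 0 (Pi.single (Fin.last k) 1) := by
    ext r c
    simp [updateCol_apply, Pi.single_apply]
  rw [det_updateCol_single_one, Fin.succAbove_last, hcorner, det_updateCol_single_one,
    Fin.succAbove_last, Fin.succAbove_zero, submatrix_submatrix]
  simp

theorem det_mul_det_submatrix_castSucc_succ {k : ℕ} (A : Matrix (Fin (k + 2)) (Fin (k + 2)) R) :
    A.det * (A.submatrix (Fin.castSucc ∘ Fin.castSucc) (Fin.castSucc ∘ Fin.succ)).det =
      (A.submatrix (Fin.last k).castSucc.succAbove (0 : Fin (k + 2)).succAbove).det *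
          (A.submatrix (Fin.last (k + 1)).succAbove (Fin.last (k + 1)).succAbove).det -
        (A.submatrix (Fin.last k).castSucc.succAbove (Fin.last (k + 1)).succAbove).det *
          (A.submatrix (Fin.last (k + 1)).succAbove (0 : Fin (k + 2)).succAbove).det := by
  have h := adjugate_mul_adjugate_sub_adjugate_mul_adjugate A Fin.last_pos.ne
    (Fin.last k).castSucc (Fin.last (k + 1))
  rw [det_updateCol_zero_updateCol_last] at h
  simp only [adjugate_fin_succ_eq_det_submatrix, Fin.val_last, Fin.val_castSucc, Fin.val_zero,
    add_zero] at h
  have heven : (-1 : R) ^ (k + 1 + (k + 1)) = 1 := Even.neg_one_pow ⟨k + 1, rfl⟩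
  have hodd : (-1 : R) ^ (k + (k + 1)) = -1 := Odd.neg_one_pow ⟨k, by ring⟩
  rw [heven, hodd, pow_succ] at h
  refine ((isUnit_neg_one (α := R)).pow k).mul_left_cancel ?_
  linear_combination -h

end Matrix

theorem Fin.val_succAbove_eq_skip {k : ℕ} (i : Fin (k + 1)) (r : Fin k) :
    (i.succAbove r : ℕ) = skip i r := by
  simp only [Fin.succAbove, skip, apply_ite Fin.val, Fin.lt_def, Fin.val_castSucc, Fin.val_succ]

theorem dmMinor_eq_det_submatrix {K : Type*} [Field K] {k : ℕ}
    (A : Matrix (Fin (k + 1)) (Fin (k + 1)) K) (i j : Fin (k + 1)) :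
    dmMinor A i j = (A.submatrix i.succAbove j.succAbove).det := by
  unfold dmMinor
  congr
  ext r c
  simp only [← Fin.val_succAbove_eq_skip]

theorem block_zero_one_eq_submatrix {K : Type*} [Field K] {k : ℕ}
    (A : Matrix (Fin (k + 2)) (Fin (k + 2)) K) (h₁ : 0 + k ≤ k + 2) (h₂ : 1 + k ≤ k + 2) :
    block A 0 1 k h₁ h₂ = A.submatrix (Fin.castSucc ∘ Fin.castSucc) (Fin.castSucc ∘ Fin.succ) := by
  ext r c
  simp only [block, Matrix.of_apply, Matrix.submatrix_apply]
  congr 1 <;> ext <;> simp [add_comm]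

/-- **Double-crossing method, special case.**  Let `A` be `n × n` over a field,
`n ≥ 3`, and suppose the "double-crossed" contiguous minor
`α = det A_{1..n−2, 2..n−1}` (1-based; 0-based this is the `(n−2) × (n−2)`
block with upper-left corner `(0, 1)`) is nonzero.  With `m(r, c)` the `(r, c)`
minor of `A` (1-based; 0-based the relevant rows are `n−2, n−1` and columns
`0, n−1`),
`det A = (m(n−1,1)·m(n,n) − m(n−1,n)·m(n,1)) / α`. -/
theorem double_crossing_special_case {K : Type*} [Field K] {n : ℕ} (hn : 3 ≤ n)
    (A : Matrix (Fin n) (Fin n) K)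
    (hα : (block A 0 1 (n - 2) (by omega) (by omega)).det ≠ 0) :
    A.det = (dmMinor A ⟨n - 2, by omega⟩ ⟨0, by omega⟩
               * dmMinor A ⟨n - 1, by omega⟩ ⟨n - 1, by omega⟩
             - dmMinor A ⟨n - 2, by omega⟩ ⟨n - 1, by omega⟩
               * dmMinor A ⟨n - 1, by omega⟩ ⟨0, by omega⟩)
            / (block A 0 1 (n - 2) (by omega) (by omega)).det := by
  obtain ⟨k, rfl⟩ : ∃ k, n = k + 2 := ⟨n - 2, by omega⟩
  have hblock : (block A 0 1 (k + 2 - 2) (by omega) (by omega)).det =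
      (A.submatrix (Fin.castSucc ∘ Fin.castSucc) (Fin.castSucc ∘ Fin.succ)).det :=
    congrArg Matrix.det (block_zero_one_eq_submatrix A _ _)
  rw [eq_div_iff hα, hblock]
  simp only [dmMinor_eq_det_submatrix]
  exact Matrix.det_mul_det_submatrix_castSucc_succ A
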